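/- For each j ∈ [1,k], the restriction of the composition tableau T(∞) of D to the columns C_1,…,C_j coincides with the composition tableau of the truncated diagram consisting of the columns C_1,…,C_j alone. Consequently, ℓ(D) is the disjoint union of ℓ(D^k) (the line family of the diagram D^k obtained from D by deleting its last column C_k) and the set ℓ(D^k, C_k) of those lines of ℓ(D) whose right end-point lies in C_k. -/

import Mathlib

open scoped Classical

/-- height of column `j` of the diagram (columns numbered from 1). -/
def hgt (c : List ℕ) (j : ℕ) : ℕ := c.getD (j - 1) 0

/-- number of boxes in the columns strictly to the left of column `j`. -/
def off (c : List ℕ) (j : ℕ) : ℕ := (c.take (j - 1)).sum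

/-- `(i, j)` (row `i`, column `j`) is a box of the diagram `D`. -/
def IsBox (c : List ℕ) (i j : ℕ) : Prop :=
  1 ≤ j ∧ j ≤ c.length ∧ 1 ≤ i ∧ i ≤ hgt c j

/-- the entry of the box `(i, j)` in the tableau `T`. -/
def Tentry (c : List ℕ) (i j : ℕ) : ℕ := off c j + i

/-- the column of the box of `D` carrying entry `m` in `T`. -/
noncomputable def colOf (c : List ℕ) (m : ℕ) : ℕ := sInf {j | m ≤ (c.take j).sum}

/-- the row of the box of `D` carrying entry `m` in `T`. -/
noncomputable def rowOf (c : List ℕ) (m : ℕ) : ℕ := m - off c (colOf c m)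

/-- the total order `≼` on entries: increasing down columns, then from right to left. -/
def ple (c : List ℕ) (a b : ℕ) : Prop :=
  colOf c b < colOf c a ∨ (colOf c a = colOf c b ∧ a ≤ b)

/-- the strict version of `≼`. -/
def plt (c : List ℕ) (a b : ℕ) : Prop :=
  colOf c b < colOf c a ∨ (colOf c a = colOf c b ∧ a < b)

/-- column `j` has a left neighbour in `D`. -/
def HasLeftNb (c : List ℕ) (j : ℕ) : Prop :=
  ∃ i, 1 ≤ i ∧ i < j ∧ hgt c i = hgt c j ∧
    ∀ i', i < i' → i' < j → hgt c i' ≠ hgt c j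

/-- the `j`-th column of the tableau `T`, rows to optional entries. -/
def Tcol (c : List ℕ) (j : ℕ) : ℕ → Option ℕ := fun i =>
  if 1 ≤ i ∧ i ≤ hgt c j then some (Tentry c i j) else none

/-- one step of the propagation rule building `T(∞)`: the entry (if any) in row `t`
of column `j - 1` of `T(∞)` (given by `prev`) is propagated into the partially
built column `j` (given by `cur`). -/
noncomputable def propStep (c : List ℕ) (j : ℕ) (prev : ℕ → Option ℕ)
    (cur : ℕ → Option ℕ) (t : ℕ) : ℕ → Option ℕ :=
  match prev t with
  | none => cur
  | some l =>
    if hgt c j = t then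
      if HasLeftNb c j ∧ cur (t + 1) = none then
        Function.update cur (t + 1) (some l)
      else cur
    else
      if cur t = none then Function.update cur t (some l) else cur

/-- the `j`-th column of the composition tableau `T(∞)`. -/
noncomputable def TinfCol (c : List ℕ) : ℕ → ℕ → Option ℕ
  | 0 => fun _ => none
  | 1 => Tcol c 1
  | j + 2 =>
      (List.range (c.sum + 2)).foldl
        (propStep c (j + 2) (TinfCol c (j + 1))) (Tcol c (j + 2))

/-- labels of lines: `1` or `∗`. -/
inductive Lab : Type
  | one : Lab
  | star : Lab
deriving DecidableEq

/-- maximal height among the columns `1, …, j - 1`. -/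
def maxHgt (c : List ℕ) (j : ℕ) : ℕ := (c.take (j - 1)).foldr max 0

/-- the maximal column height of the diagram `D`. -/
def maxH (c : List ℕ) : ℕ := c.foldr max 0

/-- `LineB c a i j lab` : the line family `ℓ(D)` contains a line labelled `lab`
whose left end-point is the box of `D` carrying entry `a` in `T` and whose right
end-point is the box `(i, j)` (row `i` of column `C_j`). -/
def LineB (c : List ℕ) (a i j : ℕ) (lab : Lab) : Prop :=
  2 ≤ j ∧ j ≤ c.length ∧ 1 ≤ i ∧
    (match lab with
     | Lab.one =>
         (maxHgt c j < hgt c j ∧ i ≤ maxHgt c j + 1 ∧ TinfCol c (j - 1) i = some a)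
       ∨ (hgt c j ≤ maxHgt c j ∧ i + 1 ≤ hgt c j ∧ TinfCol c (j - 1) i = some a)
       ∨ (hgt c j ≤ maxHgt c j ∧ i = hgt c j ∧
           ¬(∃ j', 1 ≤ j' ∧ j' < j ∧ hgt c j' = hgt c j) ∧
           TinfCol c (j - 1) i = some a)
       ∨ (hgt c j ≤ maxHgt c j ∧ i = hgt c j ∧
           (∃ j', 1 ≤ j' ∧ j' < j ∧ hgt c j' = hgt c j) ∧
           TinfCol c (j - 1) (i + 1) = some a)
     | Lab.star =>
         hgt c j ≤ maxHgt c j ∧ i = hgt c j ∧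
           (∃ j', 1 ≤ j' ∧ j' < j ∧ hgt c j' = hgt c j) ∧
           TinfCol c (j - 1) i = some a)

/-- `LineE c a b lab` : `ℓ(D)` contains a line labelled `lab` joining the box of `D`
carrying entry `a` in `T` (on the left) to the box carrying entry `b` (on the right). -/
def LineE (c : List ℕ) (a b : ℕ) (lab : Lab) : Prop :=
  ∃ i j, LineB c a i j lab ∧ b = Tentry c i j

/-- the box `(i, j)` of `D` is right extremal relative to `ℓ(D)`. -/
def RExt (c : List ℕ) (i j : ℕ) : Prop :=
  IsBox c i j ∧ ∀ i' j', ¬ LineB c (Tentry c i j) i' j' Lab.one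

/-- `c` is a composition of `n`. -/
def IsComposition (c : List ℕ) (n : ℕ) : Prop :=
  c.sum = n ∧ ∀ x ∈ c, 0 < x

/-! Column `j` of `T(∞)` is built from the heights, offsets and left neighbours of the
columns `C_1, …, C_j` and from column `j - 1` of `T(∞)`, all of which only see the first `j`
columns. The one global datum is the number `n + 2` of propagation steps, and it is harmless:
step `t` writes only into row `t` or `t + 1`, so no row below `n + 1` is ever filled, and the
steps beyond the size of a truncated diagram act on empty rows and do nothing. A line of `ℓ(D)`
ending in column `C_j` reads only the columns up to `C_j` and column `j - 1` of `T(∞)`; hence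
the lines not ending in `C_k` are exactly the lines of `ℓ(D^k)`. -/

section Truncation

variable {c : List ℕ} {J j : ℕ}

lemma hgt_take (h1 : 1 ≤ j) (h2 : j ≤ J) : hgt (c.take J) j = hgt c j := by
  unfold hgt
  rw [List.getD_eq_getElem?_getD, List.getD_eq_getElem?_getD,
    List.getElem?_take_of_lt (by omega)]

lemma off_take (h : j - 1 ≤ J) : off (c.take J) j = off c j := by
  rw [off, off, List.take_take, min_eq_left h]

lemma maxHgt_take (h : j - 1 ≤ J) : maxHgt (c.take J) j = maxHgt c j := by
  rw [maxHgt, maxHgt, List.take_take, min_eq_left h]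

lemma tcol_take (h1 : 1 ≤ j) (h2 : j ≤ J) : Tcol (c.take J) j = Tcol c j := by
  funext i
  rw [Tcol, Tcol, Tentry, Tentry, hgt_take h1 h2, off_take (by omega)]

lemma hasLeftNb_take (h1 : 1 ≤ j) (h2 : j ≤ J) : HasLeftNb (c.take J) j ↔ HasLeftNb c j := by
  unfold HasLeftNb
  refine exists_congr fun i => and_congr_right fun hi => and_congr_right fun hij => ?_
  rw [hgt_take hi (by omega), hgt_take h1 h2]
  refine and_congr_right fun _ => forall_congr' fun i' => forall_congr' fun hi' =>
    forall_congr' fun hi'j => ?_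
  rw [hgt_take (by omega) (by omega)]

end Truncation

section Propagation

variable {c : List ℕ} {j t' t : ℕ} {prev cur : ℕ → Option ℕ}

lemma propStep_of_prev_eq_none (h : prev t' = none) : propStep c j prev cur t' = cur := by
  rw [propStep, h]

lemma propStep_apply_of_ne (h : t ≠ if hgt c j = t' then t' + 1 else t') :
    propStep c j prev cur t' t = cur t := by
  unfold propStep
  cases prev t' with
  | none => rfl
  | some l => split_ifs at h ⊢ <;> first | rfl | exact Function.update_of_ne h _ _

lemma foldl_apply_eq_of_forall_mem {α β γ : Type*} {f : (α → β) → γ → α → β} {a : α}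
    (l : List γ) (h : ∀ x ∈ l, ∀ g, f g x a = g a) (g : α → β) : l.foldl f g a = g a := by
  induction l generalizing g with
  | nil => rfl
  | cons x l ih =>
    rw [List.foldl_cons, ih (fun y hy => h y (List.mem_cons_of_mem x hy)), h x List.mem_cons_self]

lemma foldl_range_eq_of_le {α : Type*} (f : α → ℕ → α) (g : α) {M N : ℕ} (hMN : M ≤ N)
    (h : ∀ x t, M ≤ t → f x t = x) :
    (List.range N).foldl f g = (List.range M).foldl f g := by
  obtain ⟨d, rfl⟩ := Nat.exists_eq_add_of_le hMN
  induction d with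
  | zero => rfl
  | succ d ih =>
    rw [← Nat.add_assoc, List.range_succ, List.foldl_append, List.foldl_cons, List.foldl_nil,
      h _ _ (Nat.le_add_right _ _), ih (Nat.le_add_right _ _)]

end Propagation

lemma hgt_le_sum (c : List ℕ) (j : ℕ) : hgt c j ≤ c.sum := by
  unfold hgt
  rcases lt_or_ge (j - 1) c.length with h | h
  · rw [List.getD_eq_getElem _ _ h]
    exact List.le_sum_of_mem (List.getElem_mem h)
  · rw [List.getD_eq_default _ _ h]
    exact Nat.zero_le _

lemma tinfCol_eq_none_of_sum_add_two_le (c : List ℕ) (j : ℕ) {t : ℕ} (ht : c.sum + 2 ≤ t) :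
    TinfCol c j t = none := by
  have hTcol : ∀ j, Tcol c j t = none := fun j => by
    have := hgt_le_sum c j
    rw [Tcol, if_neg (by omega)]
  match j with
  | 0 => rfl
  | 1 => exact hTcol 1
  | j + 2 =>
    rw [TinfCol, foldl_apply_eq_of_forall_mem _ (fun x hx g => ?_), hTcol]
    have := hgt_le_sum c (j + 2)
    have := List.mem_range.1 hx
    exact propStep_apply_of_ne (by split_ifs <;> omega)

lemma tinfCol_take (c : List ℕ) {J : ℕ} : ∀ j ≤ J, TinfCol (c.take J) j = TinfCol c j
  | 0, _ => rfl
  | 1, hJ => tcol_take le_rfl hJ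
  | j + 2, hj => by
    have hprev : TinfCol (c.take J) (j + 1) = TinfCol c (j + 1) := tinfCol_take c (j + 1) (by omega)
    have hstep : propStep (c.take J) (j + 2) = propStep c (j + 2) := by
      funext prev cur t
      rw [propStep, propStep, hgt_take (by omega) hj, propext (hasLeftNb_take (by omega) hj)]
    have hsum : (c.take J).sum ≤ c.sum :=
      (List.take_sublist J c).sum_le_sum fun _ _ => Nat.zero_le _
    rw [TinfCol, TinfCol, hprev, hstep, tcol_take (by omega) hj]
    refine (foldl_range_eq_of_le _ _ (by omega) fun cur t ht => ?_).symm
    exact propStep_of_prev_eq_none (hprev ▸ tinfCol_eq_none_of_sum_add_two_le _ _ ht)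

lemma lineB_take {c : List ℕ} {J a i j : ℕ} {lab : Lab} (hjJ : j ≤ J) :
    LineB (c.take J) a i j lab ↔ LineB c a i j lab := by
  by_cases h2 : 2 ≤ j
  · have e_len : j ≤ (c.take J).length ↔ j ≤ c.length := by
      rw [List.length_take]
      omega
    have e_ex : (∃ j', 1 ≤ j' ∧ j' < j ∧ hgt (c.take J) j' = hgt c j) ↔
        (∃ j', 1 ≤ j' ∧ j' < j ∧ hgt c j' = hgt c j) :=
      exists_congr fun j' => and_congr_right fun h1 => and_congr_right fun hj' => by
        rw [hgt_take h1 (by omega)]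
    cases lab <;>
      simp only [LineB, hgt_take (by omega : 1 ≤ j) hjJ, maxHgt_take (by omega : j - 1 ≤ J),
        tinfCol_take c (J := J) (j - 1) (by omega), e_len, e_ex]
  · exact ⟨fun h => absurd h.1 h2, fun h => absurd h.1 h2⟩

lemma lineB_take_length_sub_one_iff {c : List ℕ} {a i j : ℕ} {lab : Lab} :
    LineB (c.take (c.length - 1)) a i j lab ↔ j < c.length ∧ LineB c a i j lab := by
  constructor
  · intro h
    have hj : j ≤ (c.take (c.length - 1)).length := h.2.1
    rw [List.length_take] at hj
    exact ⟨by have := h.1; omega, (lineB_take (by omega)).1 h⟩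
  · rintro ⟨hj, h⟩
    exact (lineB_take (by omega)).2 h

theorem statement6_general (c : List ℕ) :
    (∀ j, 1 ≤ j → j ≤ c.length → ∀ j' i, j' ≤ j →
        TinfCol (c.take j) j' i = TinfCol c j' i) ∧
    (∀ a i j lab, LineB c a i j lab ↔
        Xor' (LineB (c.take (c.length - 1)) a i j lab)
             (j = c.length ∧ LineB c a i j lab)) := by
  refine ⟨fun j _ _ j' i hj' => by rw [tinfCol_take c j' hj'], fun a i j lab => ?_⟩
  rw [lineB_take_length_sub_one_iff]
  have hj : LineB c a i j lab → j ≤ c.length := fun h => h.2.1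
  constructor
  · intro h
    rcases (hj h).lt_or_eq with hlt | heq
    · exact Or.inl ⟨⟨hlt, h⟩, fun h' => hlt.ne h'.1⟩
    · exact Or.inr ⟨⟨heq, h⟩, fun h' => h'.1.ne heq⟩
  · rintro (⟨⟨-, h⟩, -⟩ | ⟨⟨-, h⟩, -⟩) <;> exact h

/-- for each `j ∈ [1,k]` the restriction of the composition tableau
`T(∞)` of `D` to the columns `C_1, …, C_j` coincides with the composition tableau
of the truncated diagram consisting of `C_1, …, C_j` alone.  Consequently `ℓ(D)`
is the disjoint union of `ℓ(D^k)` (the line family of `D` with its last column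
deleted) and of the set `ℓ(D^k, C_k)` of the lines of `ℓ(D)` whose right end-point
lies in `C_k`. -/
theorem statement6 (n : ℕ) (hn : 0 < n) (c : List ℕ) (hc : IsComposition c n) :
    (∀ j, 1 ≤ j → j ≤ c.length → ∀ j' i, j' ≤ j →
        TinfCol (c.take j) j' i = TinfCol c j' i) ∧
    (∀ a i j lab, LineB c a i j lab ↔
        Xor' (LineB (c.take (c.length - 1)) a i j lab)
             (j = c.length ∧ LineB c a i j lab)) :=
  statement6_general c
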